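/- Let $n \geq 0$, $k \geq 1$, probabilities $0 < P_0 \leq \cdots \leq P_k = 1$, and let $M_n$ be defined by the recursion $P(M_n^\ell = m) = \binom{n}{m}P_\ell^m(1-P_\ell)^{n-m} + (1-P_\ell)^n P(M_n^{\ell+1}=m)$ for $m>0$, $M_n^k = n$, $M_n = M_n^0$. Then for every complex $u$: $E[u^{M_n}] = (1+P_0(u-1))^n - (1-P_0)^n + \sum_{0<\ell<k} \prod_{j<\ell}(1-P_j)^n \left((1+P_\ell(u-1))^n - (1-P_\ell)^n\right) + u^n \prod_{j<k}(1-P_j)^n$. -/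

import Mathlib

/-!
Write `F ℓ(u) = ∑ₘ P(M_n^ℓ = m) uᵐ` for the generating function of level `ℓ`. The recursion for the
point probabilities, summed against `uᵐ` and combined with the binomial theorem
`(1 + p (u - 1))ⁿ = ∑ₘ C(n, m) pᵐ (1 - p)ⁿ⁻ᵐ uᵐ`, becomes the affine recursion
`F ℓ = ((1 + P_ℓ (u - 1))ⁿ - (1 - P_ℓ)ⁿ) + (1 - P_ℓ)ⁿ F (ℓ + 1)` with `F k = uⁿ`;
unrolling it from `ℓ = 0` to `ℓ = k` gives the closed form.
-/

open Finset

theorem one_add_mul_sub_one_pow {R : Type*} [CommRing R] (n : ℕ) (p u : R) :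
    (1 + p * (u - 1)) ^ n
      = ∑ m ∈ range (n + 1), (n.choose m : R) * p ^ m * (1 - p) ^ (n - m) * u ^ m := by
  rw [show 1 + p * (u - 1) = p * u + (1 - p) by ring, add_pow]
  refine sum_congr rfl fun m _ => ?_
  ring

theorem eq_sum_range_prod_mul_add_of_forall_eq_add_mul {R : Type*} [CommSemiring R]
    (a b F : ℕ → R) (k : ℕ) (hF : ∀ ℓ < k, F ℓ = a ℓ + b ℓ * F (ℓ + 1)) :
    F 0 = ∑ j ∈ range k, (∏ i ∈ range j, b i) * a j + (∏ i ∈ range k, b i) * F k := by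
  induction k with
  | zero => simp
  | succ k ih =>
    rw [ih fun ℓ hℓ => hF ℓ (by omega), hF k (by omega), sum_range_succ, prod_range_succ]
    ring

theorem sum_range_mul_pow_eq_of_binomial_rec {R : Type*} [CommRing R] (n : ℕ) (p u : R)
    (q r : ℕ → R) (h0 : q 0 = (1 - p) ^ n * r 0)
    (hrec : ∀ m, 0 < m →
      q m = (n.choose m : R) * p ^ m * (1 - p) ^ (n - m) + (1 - p) ^ n * r m) :
    ∑ m ∈ range (n + 1), q m * u ^ m
      = (1 + p * (u - 1)) ^ n - (1 - p) ^ n + (1 - p) ^ n * ∑ m ∈ range (n + 1), r m * u ^ m := by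
  have hshift : ∑ m ∈ range n, q (m + 1) * u ^ (m + 1)
      = ∑ m ∈ range n, ((n.choose (m + 1) : R) * p ^ (m + 1) * (1 - p) ^ (n - (m + 1))
          * u ^ (m + 1) + (1 - p) ^ n * (r (m + 1) * u ^ (m + 1))) :=
    sum_congr rfl fun m _ => by rw [hrec (m + 1) m.succ_pos]; ring
  rw [one_add_mul_sub_one_pow, sum_range_succ', sum_range_succ', sum_range_succ', hshift,
    sum_add_distrib, mul_add, ← mul_sum, h0]
  simp only [Nat.choose_zero_right, Nat.cast_one, pow_zero, Nat.sub_zero]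
  ring

section Staircase

variable {n k : ℕ} {P : ℕ → ℝ} {prob : ℕ → ℕ → ℝ}

theorem prob_eq_zero_of_lt (hprobk : ∀ m, prob k m = if m = n then 1 else 0)
    (hprobrec : ∀ ℓ m, ℓ < k → 0 < m →
      prob ℓ m = (n.choose m : ℝ) * P ℓ ^ m * (1 - P ℓ) ^ (n - m)
        + (1 - P ℓ) ^ n * prob (ℓ + 1) m)
    {ℓ m : ℕ} (hℓ : ℓ ≤ k) (hm : n < m) : prob ℓ m = 0 := by
  induction hℓ using Nat.decreasingInduction with
  | self => simp [hprobk, hm.ne']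
  | of_succ ℓ hℓ ih => rw [hprobrec ℓ m hℓ (by omega), Nat.choose_eq_zero_of_lt hm, ih]; ring

theorem prob_zero_eq_mul_succ (hprobk : ∀ m, prob k m = if m = n then 1 else 0)
    (hprob0 : ∀ ℓ, ℓ < k → prob ℓ 0 = if n = 0 then 1 else 0) {ℓ : ℕ} (hℓ : ℓ < k) :
    prob ℓ 0 = (1 - P ℓ) ^ n * prob (ℓ + 1) 0 := by
  have hsucc : prob (ℓ + 1) 0 = if n = 0 then 1 else 0 := by
    rcases (show ℓ + 1 ≤ k from hℓ).eq_or_lt with h | h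
    · rw [h, hprobk]
      exact if_congr eq_comm rfl rfl
    · exact hprob0 _ h
  rw [hprob0 ℓ hℓ, hsucc]
  split_ifs with hn <;> simp [hn]

end Staircase

theorem stmt7_general (n k : ℕ) (hk : 1 ≤ k) (P : ℕ → ℝ)
    (prob : ℕ → ℕ → ℝ)
    (hprobk : ∀ m, prob k m = if m = n then 1 else 0)
    (hprob0 : ∀ ℓ, ℓ < k → prob ℓ 0 = if n = 0 then 1 else 0)
    (hprobrec : ∀ ℓ m, ℓ < k → 0 < m →
      prob ℓ m = (n.choose m : ℝ) * P ℓ ^ m * (1 - P ℓ) ^ (n - m)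
        + (1 - P ℓ) ^ n * prob (ℓ + 1) m) :
    ∀ u : ℂ, ∑' m : ℕ, ((prob 0 m : ℝ) : ℂ) * u ^ m
      = (1 + (P 0 : ℂ) * (u - 1)) ^ n - (1 - (P 0 : ℂ)) ^ n
        + ∑ ℓ ∈ Finset.Ioo 0 k,
            (∏ j ∈ Finset.range ℓ, (1 - (P j : ℂ)) ^ n) *
              ((1 + (P ℓ : ℂ) * (u - 1)) ^ n - (1 - (P ℓ : ℂ)) ^ n)
        + u ^ n * ∏ j ∈ Finset.range k, (1 - (P j : ℂ)) ^ n := by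
  intro u
  set F : ℕ → ℂ := fun ℓ => ∑ m ∈ range (n + 1), ((prob ℓ m : ℝ) : ℂ) * u ^ m
  have htsum : ∑' m : ℕ, ((prob 0 m : ℝ) : ℂ) * u ^ m = F 0 :=
    tsum_eq_sum fun m hm => by
      rw [prob_eq_zero_of_lt hprobk hprobrec k.zero_le (by simpa using hm)]
      simp
  have hFk : F k = u ^ n := by
    simp only [F, hprobk, apply_ite Complex.ofReal, Complex.ofReal_one, Complex.ofReal_zero,
      ite_mul, one_mul, zero_mul, sum_ite_eq', mem_range, Nat.lt_succ_self, if_true]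
  have hFrec : ∀ ℓ < k, F ℓ = ((1 + (P ℓ : ℂ) * (u - 1)) ^ n - (1 - (P ℓ : ℂ)) ^ n)
      + (1 - (P ℓ : ℂ)) ^ n * F (ℓ + 1) := fun ℓ hℓ =>
    sum_range_mul_pow_eq_of_binomial_rec n _ u _ _
      (by exact_mod_cast prob_zero_eq_mul_succ hprobk hprob0 hℓ)
      (fun m hm => by exact_mod_cast hprobrec ℓ m hℓ hm)
  rw [htsum, eq_sum_range_prod_mul_add_of_forall_eq_add_mul _ _ F k hFrec, hFk, range_eq_Ico,
    sum_eq_sum_Ico_succ_bot hk, Ico_add_one_left_eq_Ioo]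
  rw [range_zero, prod_empty, one_mul]
  ring

/-- Closed-form probability generating function of the number `M_n` of blocks
mined in the staircase leader-election scheme, for every complex `u`. -/
theorem stmt7 (n k : ℕ) (hk : 1 ≤ k) (P : ℕ → ℝ)
    (hP0 : 0 < P 0) (hmono : ∀ i, i < k → P i ≤ P (i + 1)) (hPk : P k = 1)
    (prob : ℕ → ℕ → ℝ)
    (hprobk : ∀ m, prob k m = if m = n then 1 else 0)
    (hprob0 : ∀ ℓ, ℓ < k → prob ℓ 0 = if n = 0 then 1 else 0)
    (hprobrec : ∀ ℓ m, ℓ < k → 0 < m →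
      prob ℓ m = (n.choose m : ℝ) * P ℓ ^ m * (1 - P ℓ) ^ (n - m)
        + (1 - P ℓ) ^ n * prob (ℓ + 1) m) :
    ∀ u : ℂ, ∑' m : ℕ, ((prob 0 m : ℝ) : ℂ) * u ^ m
      = (1 + (P 0 : ℂ) * (u - 1)) ^ n - (1 - (P 0 : ℂ)) ^ n
        + ∑ ℓ ∈ Finset.Ioo 0 k,
            (∏ j ∈ Finset.range ℓ, (1 - (P j : ℂ)) ^ n) *
              ((1 + (P ℓ : ℂ) * (u - 1)) ^ n - (1 - (P ℓ : ℂ)) ^ n)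
        + u ^ n * ∏ j ∈ Finset.range k, (1 - (P j : ℂ)) ^ n :=
  stmt7_general n k hk P prob hprobk hprob0 hprobrec
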